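/- arXiv:math/0203131 — 4 statements merged into one kernel-verified Lean document; each statement's English description precedes it below -/
import Mathlib

section
/- Let G be a finite connected graph. Define the equivalence relation ∼ on the edge set of G as the equivalence relation generated by: e ∼ e' if e = e' or {e, e'} is a bond. If C is a cycle in G, e and e' are edges with e ∼ e', and e is an edge of C, then e' is also an edge of C; that is, any cycle containing one edge of a ∼-equivalence class contains the whole class. -/
/-- A bond of a connected graph `G` is a minimal nonempty set of edges of `G`
whose deletion disconnects `G`: deleting it disconnects `G`, but deleting any
proper subset leaves the graph connected. -/
def SimpleGraph.IsBond {V : Type*} (G : SimpleGraph V) (E' : Set (Sym2 V)) : Prop :=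
  E'.Nonempty ∧ E' ⊆ G.edgeSet ∧ ¬ (G.deleteEdges E').Connected ∧
    ∀ F ⊂ E', (G.deleteEdges F).Connected

/-- The equivalence relation `∼` on edges, generated by: `e ∼ e'` if `e = e'`
or `{e, e'}` is a bond. -/
def SimpleGraph.EdgeEquiv {V : Type*} (G : SimpleGraph V) (e e' : Sym2 V) : Prop :=
  Relation.EqvGen (fun a b => a = b ∨ G.IsBond {a, b}) e e'

/-!
Let `{a, b}` be a bond with `a ≠ b` and let `a` lie on a cycle `C`. By minimality `G - b` is
connected. If `b` were not on `C`, then `C` would be a cycle of `G - b` through `a`, so `a` would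
not be a bridge of `G - b` and `G - {a, b}` would still be connected, which is absurd. Hence
membership in `C` is invariant under the generating relation of `∼`, and so under `∼` itself.
-/

namespace SimpleGraph

variable {V : Type*} {G : SimpleGraph V}

lemma Connected.connected_deleteEdges_of_mem_edges_of_isCycle (hG : G.Connected) {u : V}
    {c : G.Walk u u} (hc : c.IsCycle) {e : Sym2 V} (he : e ∈ c.edges) :
    (G.deleteEdges {e}).Connected := by
  induction e using Sym2.ind with
  | _ x y =>
    exact hG.connected_delete_edge_of_not_isBridge fun hb ↦ hb.notMem_edges_of_isCycle hc he

lemma IsBond.connected_deleteEdges_right {a b : Sym2 V} (hb : G.IsBond {a, b}) (hab : a ≠ b) :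
    (G.deleteEdges {b}).Connected :=
  hb.2.2.2 {b} (Set.ssubset_insert (Set.mem_singleton_iff.not.mpr hab))

lemma IsBond.mem_edges_of_mem_edges {a b : Sym2 V} (hb : G.IsBond {a, b}) {u : V}
    {c : G.Walk u u} (hc : c.IsCycle) (ha : a ∈ c.edges) : b ∈ c.edges := by
  by_contra hbc
  have hab : a ≠ b := by rintro rfl; exact hbc ha
  have hc' := Walk.IsCycle.toDeleteEdges G {b} hc fun e he hEq ↦
    hbc (Set.mem_singleton_iff.mp hEq ▸ he)
  have hconn := (hb.connected_deleteEdges_right hab).connected_deleteEdges_of_mem_edges_of_isCycle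
    hc' (by simpa using ha)
  rw [deleteEdges_deleteEdges, Set.union_singleton] at hconn
  exact hb.2.2.1 hconn

lemma EdgeEquiv.mem_edges_iff {e e' : Sym2 V} (h : G.EdgeEquiv e e') {u : V} {c : G.Walk u u}
    (hc : c.IsCycle) : e ∈ c.edges ↔ e' ∈ c.edges := by
  have hiff : Equivalence fun a b : Sym2 V ↦ (a ∈ c.edges ↔ b ∈ c.edges) :=
    ⟨fun _ ↦ .rfl, Iff.symm, Iff.trans⟩
  refine hiff.eqvGen_iff.mp (h.mono fun a b hab ↦ ?_)
  rcases hab with rfl | hbond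
  · rfl
  · exact ⟨hbond.mem_edges_of_mem_edges hc,
      (Set.pair_comm a b ▸ hbond).mem_edges_of_mem_edges hc⟩

end SimpleGraph

theorem mem_cycle_of_edgeEquiv_general {V : Type*}
    (G : SimpleGraph V) (v : V) (C : G.Walk v v)
    (hC : C.IsCycle) (e e' : Sym2 V) (h : G.EdgeEquiv e e')
    (he : e ∈ C.edges) : e' ∈ C.edges :=
  (h.mem_edges_iff hC).mp he

/-- Any cycle of a finite connected graph containing one edge of a
`∼`-equivalence class contains the whole class: if `e ∼ e'` and `e` lies on a
cycle `C`, then so does `e'`. -/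
theorem mem_cycle_of_edgeEquiv {V : Type*} [Fintype V]
    (G : SimpleGraph V) (hG : G.Connected) (v : V) (C : G.Walk v v)
    (hC : C.IsCycle) (e e' : Sym2 V) (h : G.EdgeEquiv e e')
    (he : e ∈ C.edges) : e' ∈ C.edges :=
  mem_cycle_of_edgeEquiv_general G v C hC e e' h he
end

section
/- Let G be a finite connected simple graph and let c be a c-type edge of G, i.e., c is not a cut edge of G and there is no other edge e of G such that {c, e} is a bond. Then there exist two cycles C and C' in G, each containing the edge c, such that the intersection of the edge sets of C and C' is precisely {c}. -/
/-!
Write `c = s(x, y)` and `K = G - c`. No single edge `e` of `K` separates `x` from `y` in `K`: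
otherwise `e` lies on the cycle formed by `c` and an `x`–`y` path of `K`, so `G - e` is still
connected and `{c, e}` is a bond. By the two-path case of Menger's theorem, `K` then has two
edge-disjoint `x`–`y` paths, and closing each of them with `c` gives the two cycles.

Menger's theorem for two paths is proved along a path from `x` to `y`, all of whose vertices are
2-edge-reachable from `x`. Given edge-disjoint walks `P`, `Q` from `x` to `w` and an edge `wv`:
if `v` lies on the trail `P`, split `P` at `v`. Otherwise take a walk from `x` to `v` avoiding
`wv`, and its part after the last vertex `z` it visits on `P ∪ Q`; if `z` is on `P`, then `P` up
to `z` followed by that part, and `Q` followed by `wv`, are edge-disjoint.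
-/

namespace SimpleGraph

variable {V : Type*} {G : SimpleGraph V} {u v w z : V}

namespace Walk

lemma exists_final_segment_outside {S : Set V} (p : G.Walk u v) (hv : v ∉ S)
    (hS : ∃ a ∈ p.support, a ∈ S) :
    ∃ z ∈ S, ∃ q : G.Walk z v, q.edges ⊆ p.edges ∧ ∀ a ∈ q.support.tail, a ∉ S := by
  induction p with
  | nil =>
    obtain ⟨a, ha, haS⟩ := hS
    rw [support_nil, List.mem_singleton] at ha
    exact absurd (ha ▸ haS) hv
  | @cons u w v h p ih =>
    by_cases hp : ∃ a ∈ p.support, a ∈ S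
    · obtain ⟨z, hz, q, hqp, hqS⟩ := ih hv hp
      exact ⟨z, hz, q, fun _ he => List.mem_cons_of_mem _ (hqp he), hqS⟩
    · push Not at hp
      have hu : u ∈ S := by
        obtain ⟨a, ha, haS⟩ := hS
        rcases List.mem_cons.mp ha with rfl | ha
        · exact haS
        · exact absurd haS (hp a ha)
      exact ⟨u, hu, cons h p, List.Subset.refl _, by simpa using hp⟩

lemma edges_disjoint_of_forall_support_tail_notMem {u' v' : V} {p : G.Walk u v}
    {q : G.Walk u' v'} (h : ∀ a ∈ p.support.tail, a ∉ q.support) : p.edges.Disjoint q.edges := by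
  intro e hep heq
  obtain ⟨d, hd, rfl⟩ := List.mem_map.mp hep
  exact h d.snd (p.map_snd_darts ▸ List.mem_map_of_mem hd) (q.snd_mem_support_of_mem_edges heq)

variable [DecidableEq V]

lemma exists_edges_disjoint_of_mem_support {p q : G.Walk u v} (hp : p.IsTrail)
    (hpq : p.edges.Disjoint q.edges) (hw : w ∈ p.support) :
    ∃ p' q' : G.Walk u w, p'.edges.Disjoint q'.edges := by
  refine ⟨p.takeUntil w hw, q.append (p.dropUntil w hw).reverse, fun e he he' => ?_⟩
  rw [edges_append, edges_reverse, List.mem_append, List.mem_reverse] at he'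
  rcases he' with he' | he'
  · exact hpq (p.edges_takeUntil_subset_edges hw he) he'
  · exact hp.disjoint_edges_takeUntil_dropUntil hw he he'

lemma exists_edges_disjoint_of_splice {p q : G.Walk u v} (hpq : p.edges.Disjoint q.edges)
    (h : G.Adj v w) (hwp : w ∉ p.support) (hz : z ∈ p.support) (r : G.Walk z w)
    (hrq : r.edges.Disjoint q.edges) (hr : s(v, w) ∉ r.edges) :
    ∃ p' q' : G.Walk u w, p'.edges.Disjoint q'.edges := by
  refine ⟨(p.takeUntil z hz).append r, q.concat h, fun e he he' => ?_⟩
  rw [edges_append, List.mem_append] at he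
  rw [edges_concat, List.concat_eq_append, List.mem_append, List.mem_singleton] at he'
  rcases he with he | he <;> rcases he' with he' | rfl
  · exact hpq (p.edges_takeUntil_subset_edges hz he) he'
  · exact hwp (p.snd_mem_support_of_mem_edges (p.edges_takeUntil_subset_edges hz he))
  · exact hrq he he'
  · exact hr he

lemma exists_edges_disjoint_concat {p q : G.Walk u v} (hpq : p.edges.Disjoint q.edges)
    (h : G.Adj v w) (hr : (G.deleteEdges {s(v, w)}).Reachable u w) :
    ∃ p' q' : G.Walk u w, p'.edges.Disjoint q'.edges := by
  wlog hp : p.IsPath ∧ q.IsPath generalizing p q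
  · exact this (List.disjoint_of_subset_left p.edges_bypass_subset_edges
      (List.disjoint_of_subset_right q.edges_bypass_subset_edges hpq))
      ⟨p.bypass_isPath, q.bypass_isPath⟩
  by_cases hwp : w ∈ p.support
  · exact exists_edges_disjoint_of_mem_support hp.1.isTrail hpq hwp
  by_cases hwq : w ∈ q.support
  · obtain ⟨q', p', h'⟩ := exists_edges_disjoint_of_mem_support hp.2.isTrail hpq.symm hwq
    exact ⟨p', q', h'.symm⟩
  obtain ⟨r⟩ := hr
  obtain ⟨z, hz, r', hr'r, hr'S⟩ :=
    (r.mapLe (deleteEdges_le _)).exists_final_segment_outside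
      (S := {a | a ∈ p.support ∨ a ∈ q.support}) (by simp [hwp, hwq]) ⟨u, by simp, by simp⟩
  have hvw : s(v, w) ∉ r'.edges := fun hmem => by
    have hmem := hr'r hmem
    rw [edges_mapLe_eq_edges] at hmem
    simpa using r.edges_subset_edgeSet hmem
  rcases hz with hz | hz
  · exact exists_edges_disjoint_of_splice hpq h hwp hz r'
      (edges_disjoint_of_forall_support_tail_notMem fun a ha haq => hr'S a ha (.inr haq)) hvw
  · obtain ⟨q', p', h'⟩ := exists_edges_disjoint_of_splice hpq.symm h hwq hz r'
      (edges_disjoint_of_forall_support_tail_notMem fun a ha hap => hr'S a ha (.inl hap)) hvw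
    exact ⟨p', q', h'.symm⟩

lemma exists_edges_disjoint_of_forall_isEdgeReachable_two (p : G.Walk u v)
    (hp : ∀ a ∈ p.support, G.IsEdgeReachable 2 u a) :
    ∃ p' q' : G.Walk u v, p'.edges.Disjoint q'.edges := by
  induction p using Walk.concatRec with
  | Hnil => exact ⟨nil, nil, by simp⟩
  | Hconcat p h ih =>
    obtain ⟨p', q', hpq⟩ := ih fun a ha => hp a (by simp [ha])
    exact exists_edges_disjoint_concat hpq h (isEdgeReachable_two.mp (hp _ (by simp)) _)

end Walk

theorem IsEdgeReachable.exists_isPath_edges_disjoint (h : G.IsEdgeReachable 2 u v) :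
    ∃ p q : G.Walk u v, p.IsPath ∧ q.IsPath ∧ p.edges.Disjoint q.edges := by
  classical
  obtain ⟨w, hw⟩ := (h.reachable two_ne_zero).exists_isPath
  obtain ⟨p, q, hpq⟩ := w.exists_edges_disjoint_of_forall_isEdgeReachable_two fun a ha =>
    hw.isTrail.isEdgeReachable_two_of_isEdgeReachable_two h w.start_mem_support ha
  exact ⟨p.bypass, q.bypass, p.bypass_isPath, q.bypass_isPath,
    List.disjoint_of_subset_left p.edges_bypass_subset_edges
      (List.disjoint_of_subset_right q.edges_bypass_subset_edges hpq)⟩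

lemma Walk.IsPath.isCycle_cons_mapLe_deleteEdges {p : (G.deleteEdges {s(u, v)}).Walk u v}
    (hp : p.IsPath) (h : G.Adj v u) : (cons h (p.mapLe (deleteEdges_le _))).IsCycle := by
  refine (Walk.cons_isCycle_iff _ h).mpr ⟨hp.mapLe _, fun hmem => ?_⟩
  rw [Walk.edges_mapLe_eq_edges] at hmem
  simpa [Sym2.eq_swap] using p.edges_subset_edgeSet hmem

lemma isBond_pair_of_not_reachable {e : Sym2 V} (hG : G.Connected) (huv : G.Adj u v)
    (hnb : ¬ G.IsBridge s(u, v))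
    (he : ¬ ((G.deleteEdges {s(u, v)}).deleteEdges {e}).Reachable u v) :
    e ≠ s(u, v) ∧ G.IsBond {s(u, v), e} := by
  have hK : (G.deleteEdges {s(u, v)}).Connected := hG.connected_delete_edge_of_not_isBridge hnb
  obtain ⟨p, hp⟩ := (hK.preconnected u v).exists_isPath
  have hep : e ∈ p.edges := p.mem_edges_of_not_reachable_deleteEdges he
  have hC := hp.isCycle_cons_mapLe_deleteEdges huv.symm
  have heC : e ∈ (Walk.cons huv.symm (p.mapLe (deleteEdges_le _))).edges := by
    simp [hep]
  refine ⟨fun h => by simpa [h] using p.edges_subset_edgeSet hep, ⟨_, Set.mem_insert _ _⟩,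
    Set.insert_subset huv (Set.singleton_subset_iff.mpr (Walk.edges_subset_edgeSet _ heC)),
    fun hconn => he ?_, fun F hF => ?_⟩
  · rw [deleteEdges_deleteEdges, Set.singleton_union]
    exact hconn.preconnected u v
  rcases Set.subset_pair_iff_eq.mp hF.subset with rfl | rfl | rfl | rfl
  · simpa using hG
  · exact hK
  · cases e with
    | h a b => exact hG.connected_delete_edge_of_not_isBridge fun hb =>
        hb.notMem_edges_of_isCycle hC heC
  · exact absurd rfl hF.ne

end SimpleGraph

theorem exists_two_cycles_of_cType_general {V : Type*}
    (G : SimpleGraph V) (hG : G.Connected) (c : Sym2 V)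
    (hc : c ∈ G.edgeSet) (hnb : ¬ G.IsBridge c)
    (hcType : ∀ e : Sym2 V, e ≠ c → ¬ G.IsBond {c, e}) :
    ∃ (u u' : V) (C : G.Walk u u) (C' : G.Walk u' u'),
      C.IsCycle ∧ C'.IsCycle ∧ c ∈ C.edges ∧ c ∈ C'.edges ∧
      ∀ e : Sym2 V, e ∈ C.edges → e ∈ C'.edges → e = c := by
  cases c with | h x y =>
  have hxy : (G.deleteEdges {s(x, y)}).IsEdgeReachable 2 x y :=
    SimpleGraph.isEdgeReachable_two.mpr fun e => by_contra fun he =>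
      have ⟨hec, hbond⟩ := SimpleGraph.isBond_pair_of_not_reachable hG hc hnb he
      hcType e hec hbond
  obtain ⟨p, q, hp, hq, hpq⟩ := hxy.exists_isPath_edges_disjoint
  refine ⟨y, y, _, _, hp.isCycle_cons_mapLe_deleteEdges hc.symm,
    hq.isCycle_cons_mapLe_deleteEdges hc.symm, by simp [Sym2.eq_swap], by simp [Sym2.eq_swap],
    fun e he he' => ?_⟩
  rw [SimpleGraph.Walk.edges_cons, SimpleGraph.Walk.edges_mapLe_eq_edges, List.mem_cons] at he he'
  rcases he with rfl | he
  · exact Sym2.eq_swap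
  rcases he' with rfl | he'
  · exact Sym2.eq_swap
  exact absurd he' (hpq he)

/-- If `c` is a c-type edge of a finite connected simple graph `G` (i.e. `c` is
not a cut edge, and `{c, e}` is a bond for no other edge `e`), then there are
two cycles in `G`, each containing `c`, the intersection of whose edge sets is
precisely `{c}`. -/
theorem exists_two_cycles_of_cType {V : Type*} [Fintype V]
    (G : SimpleGraph V) (hG : G.Connected) (c : Sym2 V)
    (hc : c ∈ G.edgeSet) (hnb : ¬ G.IsBridge c)
    (hcType : ∀ e : Sym2 V, e ≠ c → ¬ G.IsBond {c, e}) :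
    ∃ (u u' : V) (C : G.Walk u u) (C' : G.Walk u' u'),
      C.IsCycle ∧ C'.IsCycle ∧ c ∈ C.edges ∧ c ∈ C'.edges ∧
      ∀ e : Sym2 V, e ∈ C.edges → e ∈ C'.edges → e = c :=
  exists_two_cycles_of_cType_general G hG c hc hnb hcType
end

section
/- Let G be a finite connected graph with no cut edges, and let c be an edge of G such that there is no other edge e of G with {c, e} a bond. Then the graph G − c obtained by deleting c is connected and has no cut edges. -/
/-!
Since `G` has no bridges, `G`, `G − c` and `G − e` are connected for every edge `e`.
A bridge `e` of the connected graph `G − c` is an edge of it whose deletion disconnects it,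
so `{c, e}` would be a bond of `G`.
-/

namespace SimpleGraph

variable {V : Type*} {G : SimpleGraph V} {c e : Sym2 V}

lemma Connected.deleteEdges_singleton_of_not_isBridge (hG : G.Connected) (he : ¬ G.IsBridge e) :
    (G.deleteEdges {e}).Connected := by
  induction e using Sym2.ind with
  | _ u v => exact hG.connected_delete_edge_of_not_isBridge he

lemma Connected.mem_edgeSet_of_isBridge (hG : G.Connected) (he : G.IsBridge e) :
    e ∈ G.edgeSet := by
  induction e using Sym2.ind with
  | _ u v => exact he.reachable_iff_adj.mp (hG.preconnected u v)

lemma IsBridge.not_connected_deleteEdges (he : G.IsBridge e) :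
    ¬ (G.deleteEdges {e}).Connected := by
  induction e using Sym2.ind with
  | _ u v => exact fun hG ↦ isBridge_iff.mp he (hG.preconnected u v)

lemma isBond_pair_of_not_isBridge (hG : G.Connected) (hc : c ∈ G.edgeSet) (he : e ∈ G.edgeSet)
    (hc' : ¬ G.IsBridge c) (he' : ¬ G.IsBridge e) (hce : ¬ (G.deleteEdges {c, e}).Connected) :
    G.IsBond {c, e} := by
  refine ⟨Set.insert_nonempty c {e}, Set.insert_subset hc (Set.singleton_subset_iff.mpr he),
    hce, fun F hF ↦ ?_⟩
  rcases Set.subset_pair_iff_eq.mp hF.subset with rfl | rfl | rfl | rfl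
  · simpa using hG
  · exact hG.deleteEdges_singleton_of_not_isBridge hc'
  · exact hG.deleteEdges_singleton_of_not_isBridge he'
  · exact absurd rfl hF.ne

end SimpleGraph

theorem deleteEdge_connected_no_bridges_general {V : Type*}
    (G : SimpleGraph V) (hG : G.Connected)
    (hbridge : ∀ e : Sym2 V, ¬ G.IsBridge e)
    (c : Sym2 V) (hc : c ∈ G.edgeSet)
    (hcType : ∀ e : Sym2 V, e ≠ c → ¬ G.IsBond {c, e}) :
    (G.deleteEdges {c}).Connected ∧
      ∀ e : Sym2 V, ¬ (G.deleteEdges {c}).IsBridge e := by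
  have hGc : (G.deleteEdges {c}).Connected := hG.deleteEdges_singleton_of_not_isBridge (hbridge c)
  refine ⟨hGc, fun e he ↦ ?_⟩
  have heGc : e ∈ G.edgeSet \ {c} :=
    SimpleGraph.edgeSet_deleteEdges {c} ▸ hGc.mem_edgeSet_of_isBridge he
  have hdisc : ¬ (G.deleteEdges {c, e}).Connected := by
    rw [Set.insert_eq, ← SimpleGraph.deleteEdges_deleteEdges]
    exact he.not_connected_deleteEdges
  exact hcType e heGc.2 <|
    SimpleGraph.isBond_pair_of_not_isBridge hG hc heGc.1 (hbridge c) (hbridge e) hdisc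

/-- If a finite connected graph `G` has no cut edges and `c` is an edge of `G`
such that `{c, e}` is a bond for no other edge `e`, then `G − c` is connected
and has no cut edges. -/
theorem deleteEdge_connected_no_bridges {V : Type*} [Fintype V]
    (G : SimpleGraph V) (hG : G.Connected)
    (hbridge : ∀ e : Sym2 V, ¬ G.IsBridge e)
    (c : Sym2 V) (hc : c ∈ G.edgeSet)
    (hcType : ∀ e : Sym2 V, e ≠ c → ¬ G.IsBond {c, e}) :
    (G.deleteEdges {c}).Connected ∧
      ∀ e : Sym2 V, ¬ (G.deleteEdges {c}).IsBridge e :=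
  deleteEdge_connected_no_bridges_general G hG hbridge c hc hcType
end

section
/- Let G be a finite connected graph and let w be a weighting of G, i.e., a function from the edge set of G to the integers. Define the equivalence relation ∼ on the edge set of G as the equivalence relation generated by: e ∼ e' if e = e' or {e, e'} is a bond. Then the weight of every cycle in G is zero if and only if (i) w(c) = 0 for every edge c whose ∼-equivalence class is the singleton {c} and which is not a cut edge, and (ii) for every ∼-equivalence class B of cardinality at least 2, the sum of the weights of the edges in B is zero. -/
open SimpleGraph Walk

namespace CutWeight

set_option linter.unusedSectionVars false
set_option maxHeartbeats 1000000

variable {V : Type*} [Fintype V] [DecidableEq V] {G H : SimpleGraph V}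

/-- The weight of a walk. -/
def wsum (w : Sym2 V → ℤ) {u v : V} (p : H.Walk u v) : ℤ := (p.edges.map w).sum

variable {w : Sym2 V → ℤ}

lemma wsum_append {u v x : V} (p : H.Walk u v) (q : H.Walk v x) :
    wsum w (p.append q) = wsum w p + wsum w q := by
  simp [wsum, Walk.edges_append]

lemma wsum_reverse {u v : V} (p : H.Walk u v) : wsum w p.reverse = wsum w p := by
  simp [wsum, Walk.edges_reverse, List.map_reverse, List.sum_reverse]

lemma wsum_transfer {u v : V} (p : H.Walk u v) (K : SimpleGraph V) (hp) :
    wsum w (p.transfer K hp) = wsum w p := by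
  simp [wsum, Walk.edges_transfer]

lemma wsum_rotate {u v : V} (c : H.Walk v v) (h : u ∈ c.support) :
    wsum w (c.rotate u h) = wsum w c := by
  unfold wsum
  exact ((c.rotate_darts u h).map _).perm.map w |>.sum_eq

lemma wsum_cons {u v x : V} (h : H.Adj u v) (p : H.Walk v x) :
    wsum w (Walk.cons h p) = w s(u, v) + wsum w p := by
  simp [wsum]

lemma reachable_deleteEdges_of_reachable {a b u v : V}
    (hr : (G.deleteEdges {s(a, b)}).Reachable a b) (huv : G.Reachable u v) :
    (G.deleteEdges {s(a, b)}).Reachable u v := by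
  obtain ⟨p⟩ := huv
  induction p with
  | nil => exact Reachable.refl _
  | @cons c d _ h q ih =>
    refine Reachable.trans ?_ ih
    by_cases hcd : s(c, d) = s(a, b)
    · rw [Sym2.eq_iff] at hcd
      rcases hcd with ⟨rfl, rfl⟩ | ⟨rfl, rfl⟩
      · exact hr
      · exact hr.symm
    · exact Adj.reachable (by simp [deleteEdges_adj, h, hcd])

lemma connected_deleteEdges {a b : V} (hG : G.Connected) (hab : G.Adj a b)
    (hr : (G.deleteEdges {s(a, b)}).Reachable a b) :
    (G.deleteEdges {s(a, b)}).Connected := by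
  rw [connected_iff]
  refine ⟨fun u v => reachable_deleteEdges_of_reachable hr (hG u v), hG.nonempty⟩

lemma walk_decomp_at_edge {x y : V} (p : H.Walk x y) {e : Sym2 V} (he : e ∈ p.edges) :
    ∃ (a b : V) (hab : H.Adj a b) (p₁ : H.Walk x a) (p₂ : H.Walk b y),
      p = p₁.append (Walk.cons hab p₂) ∧ e = s(a, b) := by
  induction p with
  | nil => simp at he
  | @cons c d _ h q ih =>
    rw [Walk.edges_cons, List.mem_cons] at he
    rcases he with he | he
    · exact ⟨c, d, h, Walk.nil, q, by simp, he⟩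
    · obtain ⟨a, b, hab, p₁, p₂, rfl, rfl⟩ := ih he
      exact ⟨a, b, hab, Walk.cons h p₁, p₂, by simp, rfl⟩

lemma support_reachable {x z : V} (R : H.Walk x z) {v : V} (hv : v ∈ R.support) :
    H.Reachable x v := ⟨R.takeUntil v hv⟩

/-- split a closed trail based at a vertex occurring again in its interior -/
lemma closed_split {u : V} (T : H.Walk u u) (hT : T.IsTrail)
    (hcount : 2 ≤ T.support.tail.count u) :
    ∃ (A B : H.Walk u u), A.IsTrail ∧ B.IsTrail ∧ wsum w T = wsum w A + wsum w B ∧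
      1 ≤ A.length ∧ 1 ≤ B.length ∧ T.length = A.length + B.length := by
  cases T with
  | nil => simp at hcount
  | @cons _ b _ h' q' =>
    have hq' : (Walk.cons h' q').support.tail = q'.support := by simp
    rw [hq'] at hcount
    have hu' : u ∈ q'.support := List.count_pos_iff.mp (by omega)
    have hspec : (Walk.cons h' (q'.takeUntil u hu')).append (q'.dropUntil u hu')
        = Walk.cons h' q' := by
      rw [Walk.cons_append, Walk.take_spec]
    have hT' : ((Walk.cons h' (q'.takeUntil u hu')).append (q'.dropUntil u hu')).IsTrail := by
      rw [hspec]; exact hT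
    have hlen2 : (Walk.cons h' q').length =
        (Walk.cons h' (q'.takeUntil u hu')).length + (q'.dropUntil u hu').length := by
      conv_lhs => rw [← hspec]
      rw [Walk.length_append]
    have hcnt2 : (2:ℕ) ≤ List.count u (q'.takeUntil u hu').support
        + List.count u (q'.dropUntil u hu').support.tail := by
      have : q'.support = (q'.takeUntil u hu').support
          ++ (q'.dropUntil u hu').support.tail := by
        conv_lhs => rw [← Walk.take_spec q' hu']
        rw [Walk.support_append]
      rw [this, List.count_append] at hcount
      exact hcount
    have hcnt1 : List.count u (q'.takeUntil u hu').support = 1 :=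
      Walk.count_support_takeUntil_eq_one q' hu'
    have hBlen : 1 ≤ (q'.dropUntil u hu').length := by
      have h1 : 1 ≤ List.count u (q'.dropUntil u hu').support.tail := by omega
      have h2 : 1 ≤ (q'.dropUntil u hu').support.tail.length :=
        le_trans h1 List.count_le_length
      have h3 := Walk.length_support (q'.dropUntil u hu')
      rw [List.length_tail, h3] at h2
      omega
    refine ⟨Walk.cons h' (q'.takeUntil u hu'), q'.dropUntil u hu',
      hT'.of_append_left, hT'.of_append_right, ?_, by simp, hBlen, by omega⟩
    rw [← hspec, wsum_append]

lemma wsum_closed_trail (hcyc : ∀ (v : V) (C : H.Walk v v), C.IsCycle → wsum w C = 0) :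
    ∀ (n : ℕ) (v : V) (T : H.Walk v v), T.IsTrail → T.length ≤ n → wsum w T = 0 := by
  intro n
  induction n with
  | zero =>
    intro v T hT hl
    cases T with
    | nil => simp [wsum]
    | cons h q => simp at hl
  | succ n ih =>
    intro v T hT hl
    by_cases hc : T.IsCycle
    · exact hcyc v T hc
    cases hTnil : T with
    | nil => simp [wsum]
    | @cons _ b _ h q =>
      subst hTnil
      have hnodup : ¬ (Walk.cons h q).support.tail.Nodup := by
        intro hnd
        exact hc ⟨⟨hT, by simp⟩, hnd⟩
      obtain ⟨u, hu⟩ := List.exists_duplicate_iff_not_nodup.mpr hnodup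
      have hcount : 2 ≤ ((Walk.cons h q).support.tail).count u :=
        List.duplicate_iff_two_le_count.mp hu
      have humem : u ∈ (Walk.cons h q).support := by
        have := hu.mem
        exact List.mem_of_mem_tail this
      set T := Walk.cons h q
      have hrot : 2 ≤ (T.rotate u humem).support.tail.count u := by
        rw [((support_rotate T u humem).perm.count_eq u)]
        exact hcount
      obtain ⟨A, B, hA, hB, hsum, hA1, hB1, hlen⟩ :=
        closed_split (T.rotate u humem) (hT.rotate humem) hrot
      have hlenrot : (T.rotate u humem).length = T.length := by
        have hsp := congrArg Walk.length (T.take_spec humem)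
        rw [Walk.length_append] at hsp
        unfold Walk.rotate
        rw [Walk.length_append]
        omega
      rw [← wsum_rotate (w := w) T humem, hsum,
        ih u A hA (by omega), ih u B hB (by omega)]
      ring

lemma wsum_trail_eq (hcyc : ∀ (v : V) (C : H.Walk v v), C.IsCycle → wsum w C = 0)
    {x y : V} (t : ℤ) (ht : ∀ p : H.Walk x y, p.IsPath → wsum w p = t) :
    ∀ (n : ℕ) (T : H.Walk x y), T.IsTrail → T.length ≤ n → wsum w T = t := by
  intro n
  induction n with
  | zero =>
    intro T hT hl
    cases T with
    | nil => exact ht _ (Walk.IsPath.nil)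
    | cons h q => simp at hl
  | succ n ih =>
    intro T hT hl
    by_cases hp : T.IsPath
    · exact ht T hp
    have hnodup : ¬ T.support.Nodup := fun hnd => hp (Walk.IsPath.mk' hnd)
    obtain ⟨u, hu⟩ := List.exists_duplicate_iff_not_nodup.mpr hnodup
    have hcount : 2 ≤ T.support.count u := List.duplicate_iff_two_le_count.mp hu
    have humem : u ∈ T.support := hu.mem
    have hcsplit : T.support = (T.takeUntil u humem).support
        ++ (T.dropUntil u humem).support.tail := by
      conv_lhs => rw [← Walk.take_spec T humem]
      rw [Walk.support_append]
    have hcnt1 : (T.takeUntil u humem).support.count u = 1 :=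
      Walk.count_support_takeUntil_eq_one T humem
    have hcnt2 : 1 ≤ ((T.dropUntil u humem).support.tail).count u := by
      rw [hcsplit, List.count_append] at hcount
      omega
    cases hrest : T.dropUntil u humem with
    | nil =>
      rw [hrest] at hcnt2
      simp at hcnt2
    | @cons _ b _ h' q' =>
      have hu2 : u ∈ q'.support := by
        have : (Walk.cons h' q').support.tail = q'.support := by simp
        rw [hrest, this] at hcnt2
        exact List.count_pos_iff.mp (by omega)
      -- pieces
      set A := T.takeUntil u humem with hA
      set C := Walk.cons h' (q'.takeUntil u hu2) with hC
      set D := q'.dropUntil u hu2 with hD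
      have hspec : T = A.append (C.append D) := by
        conv_lhs => rw [← Walk.take_spec T humem]
        rw [hrest, hC, hD, Walk.cons_append, Walk.take_spec]
      have hedges : T.edges = A.edges ++ (C.edges ++ D.edges) := by
        rw [hspec, Walk.edges_append, Walk.edges_append]
      have hnd := hT.edges_nodup
      rw [hedges] at hnd
      have hndA : A.edges.Nodup := hnd.of_append_left
      have hndCD : (C.edges ++ D.edges).Nodup := hnd.of_append_right
      have hdisjA : A.edges.Disjoint (C.edges ++ D.edges) :=
        List.disjoint_of_nodup_append hnd
      have hndAD : (A.edges ++ D.edges).Nodup :=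
        List.Nodup.append hndA hndCD.of_append_right
          (fun e he => hdisjA he ∘ List.mem_append_right _)
      have hT2 : (A.append D).IsTrail := by
        rw [Walk.isTrail_def, Walk.edges_append]
        exact hndAD
      have hCtrail : C.IsTrail := by
        rw [Walk.isTrail_def]
        exact hndCD.of_append_left
      have hClen : 1 ≤ C.length := by simp [hC]
      have hlensplit : T.length = A.length + (C.length + D.length) := by
        rw [hspec, Walk.length_append, Walk.length_append]
      have hsum : wsum w T = wsum w (A.append D) + wsum w C := by
        rw [hspec, wsum_append, wsum_append, wsum_append]
        ring
      rw [hsum, ih (A.append D) hT2 (by rw [Walk.length_append]; omega),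
        wsum_closed_trail hcyc C.length u C hCtrail le_rfl]
      ring

lemma exists_prefix_first_hit (S : Set V) :
    ∀ {a b : V} (W : H.Walk a b), b ∈ S →
      ∃ (u : V) (W' : H.Walk a u), u ∈ S ∧ W'.edges.Sublist W.edges ∧
        (∀ v ∈ W'.support, v ∈ S → v = u) := by
  intro a b W
  induction W with
  | nil =>
    intro hb
    exact ⟨_, Walk.nil, hb, by simp, by intro v hv _; simpa using hv⟩
  | @cons a c b h q ih =>
    intro hb
    by_cases haS : a ∈ S
    · exact ⟨_, Walk.nil, haS, by simp, by intro v hv _; simpa using hv⟩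
    · obtain ⟨u, W'', hu, hsub, hsupp⟩ := ih hb
      refine ⟨u, Walk.cons h W'', hu, ?_, ?_⟩
      · rw [Walk.edges_cons, Walk.edges_cons]
        exact hsub.cons₂ _
      · intro v hv hvS
        rw [Walk.support_cons, List.mem_cons] at hv
        rcases hv with rfl | hv
        · exact absurd hvS haS
        · exact hsupp v hv hvS

lemma mem_support_rotate {u v : V} (T : H.Walk v v) (h : u ∈ T.support) {s : V}
    (hs : s ∈ T.support) : s ∈ (T.rotate u h).support := by
  unfold Walk.rotate
  rw [Walk.mem_support_append_iff]
  rw [← Walk.take_spec T h, Walk.mem_support_append_iff] at hs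
  tauto

lemma nodup_append3 {α : Type*} {l₁ l₂ l₃ : List α} (h₁ : l₁.Nodup) (h₂ : l₂.Nodup)
    (h₃ : l₃.Nodup) (d₁₂ : l₁.Disjoint l₂) (d₁₃ : l₁.Disjoint l₃) (d₂₃ : l₂.Disjoint l₃) :
    (l₁ ++ (l₂ ++ l₃)).Nodup := by
  refine List.Nodup.append h₁ (List.Nodup.append h₂ h₃ d₂₃) ?_
  intro e he he'
  rcases List.mem_append.mp he' with h | h
  · exact d₁₂ he h
  · exact d₁₃ he h

/-- Edges of a walk whose only vertex on a trail `T` is its endpoint are disjoint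
from the edges of `T`. -/
lemma edges_disjoint_of_first_hit {a u : V} {T : H.Walk a a} {x : V} {W : H.Walk x u}
    (hW : ∀ v ∈ W.support, v ∈ {v | v ∈ T.support} → v = u)
    (hedge : ∀ e ∈ T.edges, ¬ e.IsDiag) :
    W.edges.Disjoint T.edges := by
  intro e heW heT
  induction e using Sym2.ind with
  | _ p q =>
    have hp : p ∈ T.support := Walk.fst_mem_support_of_mem_edges T heT
    have hq : q ∈ T.support := Walk.snd_mem_support_of_mem_edges T heT
    have hp' : p ∈ W.support := Walk.fst_mem_support_of_mem_edges W heW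
    have hq' : q ∈ W.support := Walk.snd_mem_support_of_mem_edges W heW
    have hpu := hW p hp' hp
    have hqu := hW q hq' hq
    subst hpu; subst hqu
    exact hedge _ heT (by simp [Sym2.mk_isDiag_iff])

lemma merge_closed_trail {a x y z : V} (T : H.Walk a a) (hT : T.IsTrail)
    (hyT : y ∈ T.support) (hzT : z ∈ T.support)
    (A B : H.Walk x z) (hA : A.IsTrail) (hB : B.IsTrail)
    (hdisj : A.edges.Disjoint B.edges) (hxT : x ∉ T.support) :
    ∃ (b : V) (T' : H.Walk b b), T'.IsTrail ∧ x ∈ T'.support ∧ y ∈ T'.support := by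
  have hTdiag : ∀ e ∈ T.edges, ¬ e.IsDiag := fun e he =>
    (H.not_isDiag_of_mem_edgeSet (T.edges_subset_edgeSet he))
  obtain ⟨u₁, A', hu₁, hsubA, hsuppA⟩ := exists_prefix_first_hit {v | v ∈ T.support} A hzT
  obtain ⟨u₂, B', hu₂, hsubB, hsuppB⟩ := exists_prefix_first_hit {v | v ∈ T.support} B hzT
  have hA' : A'.IsTrail := ⟨hA.edges_nodup.sublist hsubA⟩
  have hB' : B'.IsTrail := ⟨hB.edges_nodup.sublist hsubB⟩
  have hA'T : A'.edges.Disjoint T.edges := edges_disjoint_of_first_hit hsuppA hTdiag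
  have hB'T : B'.edges.Disjoint T.edges := edges_disjoint_of_first_hit hsuppB hTdiag
  have hA'B' : A'.edges.Disjoint B'.edges :=
    fun e he he' => hdisj (hsubA.mem he) (hsubB.mem he')
  by_cases huu : u₁ = u₂
  · subst huu
    set R := T.rotate u₁ hu₁ with hR
    have hRtrail : R.IsTrail := hT.rotate hu₁
    have hRperm : R.edges.Perm T.edges := (T.rotate_edges u₁ hu₁).perm
    refine ⟨x, A'.append (R.append B'.reverse), ?_, ?_, ?_⟩
    · rw [Walk.isTrail_def, Walk.edges_append, Walk.edges_append, Walk.edges_reverse]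
      refine nodup_append3 hA'.edges_nodup hRtrail.edges_nodup
        (by rw [List.nodup_reverse]; exact hB'.edges_nodup) ?_ ?_ ?_
      · intro e he he'; exact hA'T he (hRperm.mem_iff.mp he')
      · intro e he he'; exact hA'B' he (List.mem_reverse.mp he')
      · intro e he he'
        exact hB'T (List.mem_reverse.mp he') (hRperm.mem_iff.mp he)
    · exact Walk.start_mem_support _
    · rw [Walk.mem_support_append_iff, Walk.mem_support_append_iff]
      exact Or.inr (Or.inl (mem_support_rotate T hu₁ hyT))
  · set R := T.rotate u₁ hu₁ with hR
    have hRtrail : R.IsTrail := hT.rotate hu₁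
    have hRperm : R.edges.Perm T.edges := (T.rotate_edges u₁ hu₁).perm
    have hu₂R : u₂ ∈ R.support := mem_support_rotate T hu₁ hu₂
    set C := R.takeUntil u₂ hu₂R with hCdef
    set D := R.dropUntil u₂ hu₂R with hDdef
    have hCD : C.append D = R := Walk.take_spec R hu₂R
    have hCtrail : C.IsTrail := hRtrail.takeUntil hu₂R
    have hDtrail : D.IsTrail := hRtrail.dropUntil hu₂R
    have hCT : ∀ e ∈ C.edges, e ∈ T.edges :=
      fun e he => hRperm.mem_iff.mp (Walk.edges_takeUntil_subset R hu₂R he)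
    have hDT : ∀ e ∈ D.edges, e ∈ T.edges :=
      fun e he => hRperm.mem_iff.mp (Walk.edges_dropUntil_subset R hu₂R he)
    have hyR : y ∈ R.support := mem_support_rotate T hu₁ hyT
    rw [← hCD, Walk.mem_support_append_iff] at hyR
    rcases hyR with hyC | hyD
    · refine ⟨x, A'.append (C.append B'.reverse), ?_, Walk.start_mem_support _, ?_⟩
      · rw [Walk.isTrail_def, Walk.edges_append, Walk.edges_append, Walk.edges_reverse]
        refine nodup_append3 hA'.edges_nodup hCtrail.edges_nodup
          (by rw [List.nodup_reverse]; exact hB'.edges_nodup) ?_ ?_ ?_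
        · intro e he he'; exact hA'T he (hCT _ he')
        · intro e he he'; exact hA'B' he (List.mem_reverse.mp he')
        · intro e he he'; exact hB'T (List.mem_reverse.mp he') (hCT _ he)
      · rw [Walk.mem_support_append_iff, Walk.mem_support_append_iff]
        exact Or.inr (Or.inl hyC)
    · refine ⟨x, B'.append (D.append A'.reverse), ?_, Walk.start_mem_support _, ?_⟩
      · rw [Walk.isTrail_def, Walk.edges_append, Walk.edges_append, Walk.edges_reverse]
        refine nodup_append3 hB'.edges_nodup hDtrail.edges_nodup
          (by rw [List.nodup_reverse]; exact hA'.edges_nodup) ?_ ?_ ?_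
        · intro e he he'; exact hB'T he (hDT _ he')
        · intro e he he'
          exact hA'B' (List.mem_reverse.mp he') he
        · intro e he he'; exact hA'T (List.mem_reverse.mp he') (hDT _ he)
      · rw [Walk.mem_support_append_iff, Walk.mem_support_append_iff]
        exact Or.inr (Or.inl hyD)

lemma edges_up {s : Set (Sym2 V)} {u v : V} (W : (H.deleteEdges s).Walk u v) :
    ∀ e ∈ W.edges, e ∈ H.edgeSet := by
  intro e he
  have := W.edges_subset_edgeSet he
  rw [edgeSet_deleteEdges] at this
  exact this.1

lemma edges_avoid {s : Set (Sym2 V)} {u v : V} (W : (H.deleteEdges s).Walk u v) :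
    ∀ e ∈ W.edges, e ∉ s := by
  intro e he
  have := W.edges_subset_edgeSet he
  rw [edgeSet_deleteEdges] at this
  exact this.2

/-- Produce a path in `H` avoiding the deleted edges, from reachability in `H - s`. -/
lemma exists_path_avoiding {s : Set (Sym2 V)} {u v : V}
    (hr : (H.deleteEdges s).Reachable u v) :
    ∃ B : H.Walk u v, B.IsPath ∧ ∀ e ∈ B.edges, e ∉ s := by
  obtain ⟨W⟩ := hr
  refine ⟨(W.transfer H (edges_up W)).bypass, Walk.bypass_isPath _, ?_⟩
  intro e he
  have := Walk.edges_bypass_subset _ he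
  rw [Walk.edges_transfer] at this
  exact edges_avoid W e this

lemma exists_closed_trail_through {y : V} :
    ∀ {x : V} (p : H.Walk x y), p.IsPath → x ≠ y →
      (∀ e ∈ H.edgeSet, (H.deleteEdges {e}).Reachable x y) →
      ∃ (a : V) (T : H.Walk a a), T.IsTrail ∧ x ∈ T.support ∧ y ∈ T.support := by
  intro x p
  induction p with
  | nil => exact fun _ hxy _ => absurd rfl hxy
  | @cons x z y' h q ih =>
    intro hp hxy hsep
    have hq : q.IsPath := hp.of_cons
    have hxq : x ∉ q.support := ((Walk.cons_isPath_iff h q).mp hp).2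
    have he₀ : s(x, z) ∈ H.edgeSet := (mem_edgeSet H).mpr h
    have he₀q : s(x, z) ∉ q.edges :=
      fun hmem => hxq (Walk.fst_mem_support_of_mem_edges q hmem)
    have hrxy : (H.deleteEdges {s(x, z)}).Reachable x y' := hsep _ he₀
    by_cases hzy : z = y'
    · subst hzy
      obtain ⟨B, hBpath, hBavoid⟩ := exists_path_avoiding hrxy
      refine ⟨x, B.append (Walk.cons h.symm Walk.nil), ?_, Walk.start_mem_support _, ?_⟩
      · rw [Walk.isTrail_def, Walk.edges_append]
        refine List.Nodup.append hBpath.isTrail.edges_nodup (by simp) ?_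
        intro e he he'
        simp only [Walk.edges_cons, Walk.edges_nil, List.mem_singleton] at he'
        subst he'
        exact hBavoid _ he (by rw [Sym2.eq_swap]; rfl)
      · rw [Walk.mem_support_append_iff]
        exact Or.inl (Walk.end_mem_support B)
    · have hqdel : (H.deleteEdges {s(x, z)}).Reachable z y' :=
        ⟨q.toDeleteEdges {s(x, z)} (by intro e he; simp; rintro rfl; exact he₀q he)⟩
      have hsep' : ∀ e ∈ H.edgeSet, (H.deleteEdges {e}).Reachable z y' := by
        intro e he
        by_cases hee : e = s(x, z)
        · subst hee
          exact hqdel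
        · refine Reachable.trans (Adj.reachable ?_) (hsep e he)
          rw [deleteEdges_adj]
          refine ⟨h.symm, ?_⟩
          simp only [Set.mem_singleton_iff]
          rw [Sym2.eq_swap]
          exact fun hc => hee hc.symm
      obtain ⟨aT, T, hTtr, hzT, hyT⟩ := ih hq hzy hsep'
      by_cases hxT : x ∈ T.support
      · exact ⟨aT, T, hTtr, hxT, hyT⟩
      · have hrxz : (H.deleteEdges {s(x, z)}).Reachable x z := hrxy.trans hqdel.symm
        obtain ⟨B, hBpath, hBavoid⟩ := exists_path_avoiding hrxz
        have hB0 : s(x, z) ∉ B.edges := fun hc => hBavoid _ hc rfl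
        refine merge_closed_trail T hTtr hyT hzT (Walk.cons h Walk.nil) B
          (by simp [Walk.isTrail_def]) hBpath.isTrail ?_ hxT
        intro e he he'
        simp only [Walk.edges_cons, Walk.edges_nil, List.mem_singleton] at he
        subst he
        exact hB0 he'

lemma support_reachable' {x z : V} (R : H.Walk x z) {v : V} (hv : v ∈ R.support) :
    H.Reachable v z := ⟨R.dropUntil v hv⟩

noncomputable def sep (H : SimpleGraph V) (x y : V) : Finset (Sym2 V) :=
  Set.Finite.toFinset (Set.toFinite {e | e ∈ H.edgeSet ∧ ¬ (H.deleteEdges {e}).Reachable x y})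

lemma mem_sep {H : SimpleGraph V} {x y : V} {e : Sym2 V} :
    e ∈ sep H x y ↔ e ∈ H.edgeSet ∧ ¬ (H.deleteEdges {e}).Reachable x y := by
  simp [sep]

lemma reachable_delete_one {u v : V} (R : H.Walk u v) {e : Sym2 V} (he : e ∉ R.edges) :
    (H.deleteEdges {e}).Reachable u v := by
  refine ⟨R.toDeleteEdges {e} ?_⟩
  intro e' he'
  simp only [Set.mem_singleton_iff]
  rintro rfl
  exact he he'

lemma reachable_delete_two {u v : V} (R : H.Walk u v) {e f : Sym2 V}
    (he : e ∉ R.edges) (hf : f ∉ R.edges) :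
    ((H.deleteEdges {e}).deleteEdges {f}).Reachable u v := by
  refine ⟨(R.toDeleteEdges {e} ?_).toDeleteEdges {f} ?_⟩
  · intro e' he'
    simp only [Set.mem_singleton_iff]
    rintro rfl
    exact he he'
  · intro e' he'
    rw [Walk.edges_transfer] at he'
    simp only [Set.mem_singleton_iff]
    rintro rfl
    exact hf he'

lemma main_lemma : ∀ (n : ℕ) (H : SimpleGraph V), H.edgeSet.ncard ≤ n →
    (∀ (v : V) (C : H.Walk v v), C.IsCycle → wsum w C = 0) →
    ∀ (x y : V) (t : ℤ), H.Reachable x y →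
      (∀ p : H.Walk x y, p.IsPath → wsum w p = t) →
      t = ∑ e ∈ sep H x y, w e := by
  intro n
  induction n with
  | zero =>
    intro H hcard hcyc x y t hreach ht
    have hempty : H.edgeSet = ∅ :=
      (Set.ncard_eq_zero (Set.toFinite _)).mp (Nat.le_zero.mp hcard)
    obtain ⟨W⟩ := hreach
    have hW := ht W.bypass (Walk.bypass_isPath W)
    have hnoedge : W.bypass.edges = [] := by
      rw [List.eq_nil_iff_forall_not_mem]
      intro e he
      have := W.bypass.edges_subset_edgeSet he
      rw [hempty] at this
      exact this
    have ht0 : t = 0 := by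
      rw [← hW]
      simp [wsum, hnoedge]
    have hsepempty : sep H x y = ∅ := by
      rw [Finset.eq_empty_iff_forall_notMem]
      intro e he
      have := (mem_sep.mp he).1
      rw [hempty] at this
      exact this
    rw [ht0, hsepempty, Finset.sum_empty]
  | succ n ih =>
    intro H hcard hcyc x y t hreach ht
    by_cases hxy : x = y
    · subst hxy
      have ht0 : t = 0 := by
        have := ht Walk.nil Walk.IsPath.nil
        simp [wsum] at this
        omega
      have hsepempty : sep H x x = ∅ := by
        rw [Finset.eq_empty_iff_forall_notMem]
        intro e he
        exact (mem_sep.mp he).2 (Reachable.refl x)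
      rw [ht0, hsepempty, Finset.sum_empty]
    obtain ⟨W₀⟩ := hreach
    set p₀ := W₀.bypass with hp₀def
    have hp₀ : p₀.IsPath := Walk.bypass_isPath W₀
    by_cases hShas : ∃ e ∈ H.edgeSet, ¬ (H.deleteEdges {e}).Reachable x y
    · obtain ⟨e₀, he₀, hesep⟩ := hShas
      have hep₀ : e₀ ∈ p₀.edges := by
        by_contra hne
        exact hesep (reachable_delete_one p₀ hne)
      obtain ⟨a, b, hab, p₁, p₂, hdecomp, rfl⟩ := walk_decomp_at_edge p₀ hep₀
      set H' := H.deleteEdges {s(a, b)} with hH'def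
      have hnd : (p₁.edges ++ (s(a, b) :: p₂.edges)).Nodup := by
        have h1 := hp₀.isTrail.edges_nodup
        rw [hdecomp, Walk.edges_append, Walk.edges_cons] at h1
        exact h1
      have he1 : s(a, b) ∉ p₁.edges :=
        fun hc => (List.disjoint_of_nodup_append hnd) hc (by simp)
      have he2 : s(a, b) ∉ p₂.edges := by
        have h1 := hnd.of_append_right
        rw [List.nodup_cons] at h1
        exact h1.1
      have hdisj12 : p₁.edges.Disjoint p₂.edges := fun e he he' =>
        (List.disjoint_of_nodup_append hnd) he (by simp [he'])
      have hp₁av : ∀ e ∈ p₁.edges, e ∉ ({s(a, b)} : Set (Sym2 V)) := by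
        intro e he
        simp only [Set.mem_singleton_iff]
        rintro rfl
        exact he1 he
      have hp₂av : ∀ e ∈ p₂.edges, e ∉ ({s(a, b)} : Set (Sym2 V)) := by
        intro e he
        simp only [Set.mem_singleton_iff]
        rintro rfl
        exact he2 he
      have hX : H'.Reachable x a := ⟨p₁.toDeleteEdges _ hp₁av⟩
      have hY : H'.Reachable b y := ⟨p₂.toDeleteEdges _ hp₂av⟩
      have hXY : ¬ H'.Reachable x y := hesep
      have hcross : ∀ v : V, H'.Reachable x v → H'.Reachable v y → False :=
        fun v h1 h2 => hXY (h1.trans h2)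
      have hreach₁ : ∀ v ∈ p₁.support, H'.Reachable x v := by
        intro v hv
        exact support_reachable (p₁.toDeleteEdges _ hp₁av) (by rwa [Walk.support_transfer])
      have hreach₂ : ∀ v ∈ p₂.support, H'.Reachable v y := by
        intro v hv
        exact support_reachable' (p₂.toDeleteEdges _ hp₂av) (by rwa [Walk.support_transfer])
      have hsupnd : (p₁.support ++ p₂.support).Nodup := by
        have h1 := hp₀.support_nodup
        rw [hdecomp, Walk.support_append, Walk.support_cons, List.tail_cons] at h1
        exact h1
      have hp₁path : p₁.IsPath := Walk.IsPath.mk' hsupnd.of_append_left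
      have hp₂path : p₂.IsPath := Walk.IsPath.mk' hsupnd.of_append_right
      have hsum₀ : wsum w p₁ + w s(a, b) + wsum w p₂ = t := by
        have h1 := ht p₀ hp₀
        rw [hdecomp, wsum_append, wsum_cons] at h1
        linarith
      have hpath1 : ∀ R : H'.Walk x a, R.IsPath → wsum w R = wsum w p₁ := by
        intro R hR
        have hRsupp : (R.transfer H (edges_up R)).support = R.support :=
          Walk.support_transfer _ _
        have hP : ((R.transfer H (edges_up R)).append (Walk.cons hab p₂)).IsPath := by
          apply Walk.IsPath.mk'
          rw [Walk.support_append, Walk.support_cons, List.tail_cons, hRsupp]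
          refine List.Nodup.append (by rw [← hRsupp]; exact (hR.transfer _).support_nodup)
            hp₂path.support_nodup ?_
          intro v hv hv'
          exact hcross v (support_reachable R hv) (hreach₂ v hv')
        have h1 := ht _ hP
        rw [wsum_append, wsum_cons, wsum_transfer] at h1
        linarith
      have hpath2 : ∀ S : H'.Walk b y, S.IsPath → wsum w S = wsum w p₂ := by
        intro S hS
        have hSsupp : (S.transfer H (edges_up S)).support = S.support :=
          Walk.support_transfer _ _
        have hP : (p₁.append (Walk.cons hab (S.transfer H (edges_up S)))).IsPath := by
          apply Walk.IsPath.mk'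
          rw [Walk.support_append, Walk.support_cons, List.tail_cons, hSsupp]
          refine List.Nodup.append hp₁path.support_nodup
            (by rw [← hSsupp]; exact (hS.transfer _).support_nodup) ?_
          intro v hv hv'
          exact hcross v (hreach₁ v hv) (support_reachable' S hv')
        have h1 := ht _ hP
        rw [wsum_append, wsum_cons, wsum_transfer] at h1
        linarith
      have hssub : H'.edgeSet ⊂ H.edgeSet := by
        rw [hH'def, edgeSet_deleteEdges]
        constructor
        · exact Set.diff_subset
        · intro hsub
          exact ((hsub he₀).2 : s(a, b) ∉ _) rfl
      have hcard' : H'.edgeSet.ncard ≤ n := by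
        have h1 := Set.ncard_lt_ncard hssub (Set.toFinite _)
        omega
      have hcyc' : ∀ (v : V) (C : H'.Walk v v), C.IsCycle → wsum w C = 0 := by
        intro v C hC
        have h1 := hcyc v (C.transfer H (edges_up C)) (hC.transfer _)
        rwa [wsum_transfer] at h1
      have ht₁ := ih H' hcard' hcyc' x a (wsum w p₁) hX hpath1
      have ht₂ := ih H' hcard' hcyc' b y (wsum w p₂) hY hpath2
      have hedgeH' : ∀ {f : Sym2 V}, f ∈ H'.edgeSet ↔ f ∈ H.edgeSet ∧ f ≠ s(a, b) := by
        intro f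
        rw [hH'def, edgeSet_deleteEdges]
        simp [Set.mem_diff]
      have hsepins : sep H x y = insert s(a, b) (sep H' x a ∪ sep H' b y) := by
        ext f
        simp only [Finset.mem_insert, Finset.mem_union, mem_sep]
        constructor
        · rintro ⟨hfE, hfsep⟩
          by_cases hfe : f = s(a, b)
          · exact Or.inl hfe
          right
          have hfE' : f ∈ H'.edgeSet := hedgeH'.mpr ⟨hfE, hfe⟩
          by_contra hcon
          push_neg at hcon
          obtain ⟨h1, h2⟩ := hcon
          have hr1 : (H'.deleteEdges {f}).Reachable x a := h1 hfE'
          have hr2 : (H'.deleteEdges {f}).Reachable b y := h2 hfE'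
          apply hfsep
          have hadj : (H.deleteEdges {f}).Adj a b := by
            rw [deleteEdges_adj]
            exact ⟨hab, by simp only [Set.mem_singleton_iff]; exact fun hc => hfe hc.symm⟩
          have hup : ∀ u' v' : V, (H'.deleteEdges {f}).Reachable u' v' →
              (H.deleteEdges {f}).Reachable u' v' := by
            intro u' v' hz
            obtain ⟨Z⟩ := hz
            refine ⟨Z.transfer _ ?_⟩
            intro e he
            have h3 := Z.edges_subset_edgeSet he
            rw [edgeSet_deleteEdges] at h3
            rw [edgeSet_deleteEdges]
            exact ⟨(hedgeH'.mp h3.1).1, h3.2⟩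
          exact ((hup _ _ hr1).trans hadj.reachable).trans (hup _ _ hr2)
        · rintro (rfl | hf | hf)
          · exact ⟨he₀, hesep⟩
          · obtain ⟨hfE', hfsep'⟩ := hf
            obtain ⟨hfE, hfne⟩ := hedgeH'.mp hfE'
            refine ⟨hfE, ?_⟩
            intro hrxy'
            obtain ⟨R, hRpath, hRavoid⟩ := exists_path_avoiding hrxy'
            have hfR : f ∉ R.edges := fun hc => hRavoid _ hc rfl
            by_cases heR : s(a, b) ∈ R.edges
            · obtain ⟨a', b', hab', R₁, R₂, hRdec, heq⟩ := walk_decomp_at_edge R heR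
              have hndR : (R₁.edges ++ (s(a', b') :: R₂.edges)).Nodup := by
                have h1 := hRpath.isTrail.edges_nodup
                rw [hRdec, Walk.edges_append, Walk.edges_cons] at h1
                exact h1
              have hR1e : s(a', b') ∉ R₁.edges :=
                fun hc => (List.disjoint_of_nodup_append hndR) hc (by simp)
              have hfR1 : f ∉ R₁.edges :=
                fun hc => hfR (by rw [hRdec, Walk.edges_append]; exact List.mem_append_left _ hc)
              rcases Sym2.eq_iff.mp heq with ⟨ha', hb'⟩ | ⟨ha', hb'⟩
              · subst ha'; subst hb'
                exact hfsep' (reachable_delete_two R₁ (heq ▸ hR1e) hfR1)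
              · subst ha'; subst hb'
                exact hcross _ (reachable_delete_one R₁ (heq ▸ hR1e)) hY
            · exact hXY (reachable_delete_one R heR)
          · obtain ⟨hfE', hfsep'⟩ := hf
            obtain ⟨hfE, hfne⟩ := hedgeH'.mp hfE'
            refine ⟨hfE, ?_⟩
            intro hrxy'
            obtain ⟨R, hRpath, hRavoid⟩ := exists_path_avoiding hrxy'
            have hfR : f ∉ R.edges := fun hc => hRavoid _ hc rfl
            by_cases heR : s(a, b) ∈ R.edges
            · obtain ⟨a', b', hab', R₁, R₂, hRdec, heq⟩ := walk_decomp_at_edge R heR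
              have hndR : (R₁.edges ++ (s(a', b') :: R₂.edges)).Nodup := by
                have h1 := hRpath.isTrail.edges_nodup
                rw [hRdec, Walk.edges_append, Walk.edges_cons] at h1
                exact h1
              have hR2e : s(a', b') ∉ R₂.edges := by
                have h1 := hndR.of_append_right
                rw [List.nodup_cons] at h1
                exact h1.1
              have hfR2 : f ∉ R₂.edges := by
                intro hc
                apply hfR
                rw [hRdec, Walk.edges_append, Walk.edges_cons]
                exact List.mem_append_right _ (List.mem_cons_of_mem _ hc)
              rcases Sym2.eq_iff.mp heq with ⟨ha', hb'⟩ | ⟨ha', hb'⟩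
              · subst ha'; subst hb'
                exact hfsep' (reachable_delete_two R₂ (heq ▸ hR2e) hfR2)
              · subst ha'; subst hb'
                exact hcross _ hX (reachable_delete_one R₂ (heq ▸ hR2e))
            · exact hXY (reachable_delete_one R heR)
      have henotin : s(a, b) ∉ sep H' x a ∪ sep H' b y := by
        intro hc
        rcases Finset.mem_union.mp hc with hc | hc <;>
          exact (hedgeH'.mp (mem_sep.mp hc).1).2 rfl
      have hdisjsep : Disjoint (sep H' x a) (sep H' b y) := by
        rw [Finset.disjoint_left]
        intro f hf1 hf2
        obtain ⟨hfE1, hfsep1⟩ := mem_sep.mp hf1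
        obtain ⟨hfE2, hfsep2⟩ := mem_sep.mp hf2
        have hfp₁ : f ∈ p₁.edges := by
          by_contra hnf
          refine hfsep1 ⟨(p₁.toDeleteEdges _ hp₁av).toDeleteEdges {f} ?_⟩
          intro e he
          rw [Walk.edges_transfer] at he
          simp only [Set.mem_singleton_iff]
          rintro rfl
          exact hnf he
        have hfp₂ : f ∈ p₂.edges := by
          by_contra hnf
          refine hfsep2 ⟨(p₂.toDeleteEdges _ hp₂av).toDeleteEdges {f} ?_⟩
          intro e he
          rw [Walk.edges_transfer] at he
          simp only [Set.mem_singleton_iff]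
          rintro rfl
          exact hnf he
        exact hdisj12 hfp₁ hfp₂
      rw [hsepins, Finset.sum_insert henotin, Finset.sum_union hdisjsep, ← ht₁, ← ht₂]
      linarith
    · -- sep is empty; use the closed trail
      push_neg at hShas
      have hsepempty : sep H x y = ∅ := by
        rw [Finset.eq_empty_iff_forall_notMem]
        intro e he
        obtain ⟨h1, h2⟩ := mem_sep.mp he
        exact h2 (hShas e h1)
      obtain ⟨a, T, hTtr, hxT, hyT⟩ := exists_closed_trail_through p₀ hp₀ hxy hShas
      set R := T.rotate x hxT with hRdef
      have hRtr : R.IsTrail := hTtr.rotate hxT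
      have hyR : y ∈ R.support := mem_support_rotate T hxT hyT
      set E := R.takeUntil y hyR with hEdef
      set F := R.dropUntil y hyR with hFdef
      have hEF : E.append F = R := Walk.take_spec R hyR
      have hsum : wsum w E + wsum w F = wsum w R := by rw [← wsum_append, hEF]
      have hR0 : wsum w R = 0 := wsum_closed_trail hcyc R.length x R hRtr le_rfl
      have hEtr : E.IsTrail := hRtr.takeUntil hyR
      have hFtr : F.IsTrail := hRtr.dropUntil hyR
      have hEt : wsum w E = t := wsum_trail_eq hcyc t ht E.length E hEtr le_rfl
      have hFt : wsum w F = t := by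
        rw [← wsum_reverse]
        exact wsum_trail_eq hcyc t ht _ F.reverse hFtr.reverse le_rfl
      rw [hsepempty, Finset.sum_empty]
      omega

lemma delete_pair (α β : Sym2 V) :
    (G.deleteEdges {α}).deleteEdges {β} = G.deleteEdges {α, β} := by
  rw [deleteEdges_deleteEdges, Set.singleton_union]

lemma pair_sub_ne {α β : Sym2 V} (hne : α ≠ β) : ({α} : Set (Sym2 V)) ⊂ {α, β} := by
  constructor
  · intro e he
    simp only [Set.mem_singleton_iff] at he
    simp [he]
  · intro hsub
    have := hsub (by simp : β ∈ ({α, β} : Set (Sym2 V)))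
    simp only [Set.mem_singleton_iff] at this
    exact hne this.symm

lemma bond_pair_facts {a b : Sym2 V} (hbond : G.IsBond {a, b}) (hne : a ≠ b) :
    a ∈ G.edgeSet ∧ b ∈ G.edgeSet ∧ ¬ (G.deleteEdges {a, b}).Connected ∧
      (G.deleteEdges {a}).Connected ∧ (G.deleteEdges {b}).Connected := by
  obtain ⟨hne', hsub, hnc, hmin⟩ := hbond
  refine ⟨hsub (by simp), hsub (by simp), hnc, hmin {a} (pair_sub_ne hne), ?_⟩
  have := hmin {b} (by rw [Set.pair_comm]; exact pair_sub_ne hne.symm)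
  exact this

lemma eqvgen_closure {r : Sym2 V → Sym2 V → Prop} {S : Set (Sym2 V)}
    (hinv : ∀ a b, r a b → (a ∈ S ↔ b ∈ S)) :
    ∀ a b, Relation.EqvGen r a b → (a ∈ S ↔ b ∈ S) := by
  intro a b h
  induction h with
  | rel _ _ h => exact hinv _ _ h
  | refl => exact Iff.rfl
  | symm _ _ _ ih => exact ih.symm
  | trans _ _ _ _ _ ih1 ih2 => exact ih1.trans ih2

lemma cycle_mem_of_bond {a b : Sym2 V} (hbond : G.IsBond {a, b}) (hne : a ≠ b)
    {u : V} (C : G.Walk u u) (hC : C.IsCycle) (ha : a ∈ C.edges) : b ∈ C.edges := by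
  by_contra hbC
  obtain ⟨haE, hbE, hnc, hca, hcb⟩ := bond_pair_facts hbond hne
  have hCavoid : ∀ e ∈ C.edges, e ∉ ({b} : Set (Sym2 V)) := by
    intro e he
    simp only [Set.mem_singleton_iff]
    rintro rfl
    exact hbC he
  have hC' : (C.toDeleteEdges {b} hCavoid).IsCycle := hC.transfer _
  have haC' : a ∈ (C.toDeleteEdges {b} hCavoid).edges := by
    rw [Walk.edges_transfer]
    exact ha
  obtain ⟨α, β, hαβ, q₁, q₂, hdec, haeq⟩ := walk_decomp_at_edge _ haC'
  have hreach : ((G.deleteEdges {b}).deleteEdges {s(α, β)}).Reachable α β := by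
    have h2 := (adj_and_reachable_delete_edges_iff_exists_cycle
      (G := G.deleteEdges {b})).mpr ⟨u, C.toDeleteEdges {b} hCavoid, hC', haeq ▸ haC'⟩
    exact h2.2
  have hconn := connected_deleteEdges hcb hαβ hreach
  rw [← haeq, delete_pair, Set.pair_comm] at hconn
  exact hnc hconn

lemma bridge_class {c : Sym2 V} (hbr : G.IsBridge c) : ∀ e, G.EdgeEquiv c e → e = c := by
  have hnotconn : ¬ (G.deleteEdges {c}).Connected := by
    induction c using Sym2.ind with
    | _ u v =>
      intro hconn
      exact (isBridge_iff.mp hbr) (hconn.preconnected u v)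
  have hnob : ∀ b', b' ≠ c → ¬ G.IsBond {c, b'} := by
    intro b' hne hbond
    exact hnotconn (hbond.2.2.2 {c} (pair_sub_ne (Ne.symm hne)))
  have hinv : ∀ a b, (a = b ∨ G.IsBond {a, b}) → (a ∈ ({c} : Set (Sym2 V)) ↔ b ∈ ({c} : Set (Sym2 V))) := by
    rintro a b (rfl | hbond)
    · exact Iff.rfl
    constructor
    · intro haS
      simp only [Set.mem_singleton_iff] at haS ⊢
      subst haS
      by_contra hne
      exact hnob b hne hbond
    · intro hbS
      simp only [Set.mem_singleton_iff] at hbS ⊢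
      subst hbS
      by_contra hne
      rw [Set.pair_comm] at hbond
      exact hnob a hne hbond
  intro e he
  exact (eqvgen_closure hinv c e he).mp rfl

lemma class_finsum_zero (hG : G.Connected)
    (hcyc : ∀ (v : V) (C : G.Walk v v), C.IsCycle → wsum w C = 0)
    {x y : V} (hadj : G.Adj x y) (hnb : ¬ G.IsBridge s(x, y)) :
    ∑ᶠ e ∈ {e | G.EdgeEquiv s(x, y) e}, w e = 0 := by
  set c := s(x, y) with hcdef
  set H := G.deleteEdges {c} with hHdef
  have hcE : c ∈ G.edgeSet := hadj
  have hr : H.Reachable x y := by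
    rw [isBridge_iff] at hnb
    push_neg at hnb
    exact hnb
  have hGH : H.Connected := connected_deleteEdges hG hadj hr
  have hcycH : ∀ (v : V) (C : H.Walk v v), C.IsCycle → wsum w C = 0 := by
    intro v C hC
    have h1 := hcyc v (C.transfer G (edges_up C)) (hC.transfer _)
    rwa [wsum_transfer] at h1
  have ht : ∀ p : H.Walk x y, p.IsPath → wsum w p = -(w c) := by
    intro p hp
    have hpc : s(y, x) ∉ (p.transfer G (edges_up p)).edges := by
      rw [Walk.edges_transfer, Sym2.eq_swap]
      intro hmem
      exact (edges_avoid p _ hmem) rfl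
    have hcyc1 := hcyc y (Walk.cons hadj.symm (p.transfer G (edges_up p)))
      ((Walk.cons_isCycle_iff _ _).mpr ⟨hp.transfer _, hpc⟩)
    rw [wsum_cons, wsum_transfer] at hcyc1
    rw [Sym2.eq_swap] at hcyc1
    linarith
  have hmain := main_lemma H.edgeSet.ncard H le_rfl hcycH x y (-(w c)) hr ht
  have hfGne : ∀ f, f ∈ H.edgeSet → f ∈ G.edgeSet ∧ f ≠ c := by
    intro f hfH
    rw [hHdef, edgeSet_deleteEdges] at hfH
    exact ⟨hfH.1, by simpa using hfH.2⟩
  have hbond : ∀ f ∈ sep H x y, G.IsBond {c, f} := by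
    intro f hf
    obtain ⟨hfH, hfsep⟩ := mem_sep.mp hf
    obtain ⟨hfG, hfnec⟩ := hfGne f hfH
    refine ⟨⟨c, by simp⟩, ?_, ?_, ?_⟩
    · intro e he
      simp only [Set.mem_insert_iff, Set.mem_singleton_iff] at he
      rcases he with rfl | rfl
      · exact hcE
      · exact hfG
    · rw [← delete_pair]
      intro hconn
      exact hfsep (hconn.preconnected x y)
    · intro F hF
      rcases Set.subset_pair_iff_eq.mp hF.subset with rfl | rfl | rfl | rfl
      · rw [deleteEdges_empty]; exact hG
      · exact hGH
      · -- F = {f} : G - f is connected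
        obtain ⟨W⟩ := hr
        set p := W.bypass with hpdef
        have hp : p.IsPath := Walk.bypass_isPath W
        have hfp : f ∈ p.edges := by
          by_contra hfnp
          exact hfsep (reachable_delete_one p hfnp)
        obtain ⟨α, β, hαβ, q₁, q₂, hdec, hfeq⟩ := walk_decomp_at_edge p hfp
        have hnd : (q₁.edges ++ (s(α, β) :: q₂.edges)).Nodup := by
          have h1 := hp.isTrail.edges_nodup
          rw [hdec, Walk.edges_append, Walk.edges_cons] at h1
          exact h1
        have hq₁f : f ∉ q₁.edges := fun hcmem =>
          (List.disjoint_of_nodup_append hnd) (hfeq ▸ hcmem : s(α,β) ∈ q₁.edges) (by simp)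
        have hq₂f : f ∉ q₂.edges := by
          have h1 := hnd.of_append_right
          rw [List.nodup_cons] at h1
          exact fun hcmem => h1.1 (hfeq ▸ hcmem)
        have hαβG : G.Adj α β := by
          rw [hHdef, deleteEdges_adj] at hαβ
          exact hαβ.1
        -- reach α β in G - f
        have hrx : (G.deleteEdges {f}).Reachable α x := by
          have := reachable_delete_one (q₁.transfer G (edges_up q₁))
            (by rw [Walk.edges_transfer]; exact hq₁f)
          exact this.symm
        have hry : (G.deleteEdges {f}).Reachable y β := by
          have := reachable_delete_one (q₂.transfer G (edges_up q₂))
            (by rw [Walk.edges_transfer]; exact hq₂f)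
          exact this.symm
        have hadjxy : (G.deleteEdges {f}).Adj x y := by
          rw [deleteEdges_adj]
          exact ⟨hadj, by simp only [Set.mem_singleton_iff]; exact fun hcc => hfnec hcc.symm⟩
        have hrαβ : (G.deleteEdges {f}).Reachable α β :=
          (hrx.trans hadjxy.reachable).trans hry
        have hcn := connected_deleteEdges hG hαβG (by rwa [hfeq] at hrαβ)
        rwa [← hfeq] at hcn
      · exact absurd rfl hF.ne
  have hstep : ∀ a b, G.IsBond {a, b} → a ∈ insert c (↑(sep H x y) : Set (Sym2 V)) →
      b ∈ insert c (↑(sep H x y) : Set (Sym2 V)) := by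
    intro a b hbond2 haS
    by_cases hab : a = b
    · exact hab ▸ haS
    obtain ⟨haE, hbE, hnc2, hca2, hcb2⟩ := bond_pair_facts hbond2 hab
    rw [Set.mem_insert_iff] at haS
    rcases haS with rfl | haSep
    · -- a = c
      by_cases hbc : b = c
      · exact Set.mem_insert_iff.mpr (Or.inl hbc)
      refine Set.mem_insert_iff.mpr (Or.inr (Finset.mem_coe.mpr (mem_sep.mpr ⟨?_, ?_⟩)))
      · rw [hHdef, edgeSet_deleteEdges]
        exact ⟨hbE, by simpa using hbc⟩
      · intro hreach'
        obtain ⟨P, hPp, hPavoid⟩ := exists_path_avoiding hreach'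
        have hPb : b ∉ (P.transfer G (edges_up P)).edges := by
          rw [Walk.edges_transfer]
          exact fun hmem => hPavoid _ hmem rfl
        have hPc : c ∉ (P.transfer G (edges_up P)).edges := by
          rw [Walk.edges_transfer]
          exact fun hmem => (edges_avoid P _ hmem) rfl
        have hreach2 := reachable_delete_two (P.transfer G (edges_up P)) hPb hPc
        have hadj' : (G.deleteEdges {b}).Adj x y := by
          rw [deleteEdges_adj]
          exact ⟨hadj, by simp only [Set.mem_singleton_iff]; exact fun hcc => hbc hcc.symm⟩
        have hcn := connected_deleteEdges hcb2 hadj' hreach2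
        rw [delete_pair, Set.pair_comm] at hcn
        exact hnc2 hcn
    · -- a ∈ sep
      obtain ⟨haH, hasep⟩ := mem_sep.mp (Finset.mem_coe.mp haSep)
      obtain ⟨haG, hanec⟩ := hfGne a haH
      by_cases hbc : b = c
      · exact Set.mem_insert_iff.mpr (Or.inl hbc)
      refine Set.mem_insert_iff.mpr (Or.inr (Finset.mem_coe.mpr (mem_sep.mpr ⟨?_, ?_⟩)))
      · rw [hHdef, edgeSet_deleteEdges]
        exact ⟨hbE, by simpa using hbc⟩
      · intro hreach'
        obtain ⟨P, hPp, hPavoid⟩ := exists_path_avoiding hreach'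
        set Pg := P.transfer G (edges_up P) with hPgdef
        have hPgb : b ∉ Pg.edges := by
          rw [hPgdef, Walk.edges_transfer]
          exact fun hmem => hPavoid _ hmem rfl
        have hPgc : c ∉ Pg.edges := by
          rw [hPgdef, Walk.edges_transfer]
          exact fun hmem => (edges_avoid P _ hmem) rfl
        have hPgpath : Pg.IsPath := hPp.transfer _
        by_cases haP : a ∈ Pg.edges
        · obtain ⟨α, β, hαβG, q₁, q₂, hdec, haeq⟩ := walk_decomp_at_edge Pg haP
          have hnd : (q₁.edges ++ (s(α, β) :: q₂.edges)).Nodup := by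
            have h1 := hPgpath.isTrail.edges_nodup
            rw [hdec, Walk.edges_append, Walk.edges_cons] at h1
            exact h1
          have hq₁a : a ∉ q₁.edges := fun hcmem =>
            (List.disjoint_of_nodup_append hnd) (haeq ▸ hcmem : s(α,β) ∈ q₁.edges) (by simp)
          have hq₂a : a ∉ q₂.edges := by
            have h1 := hnd.of_append_right
            rw [List.nodup_cons] at h1
            exact fun hcmem => h1.1 (haeq ▸ hcmem)
          have hq₁b : b ∉ q₁.edges := fun hcmem =>
            hPgb (by rw [hdec, Walk.edges_append]; exact List.mem_append_left _ hcmem)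
          have hq₂b : b ∉ q₂.edges := by
            intro hcmem
            apply hPgb
            rw [hdec, Walk.edges_append, Walk.edges_cons]
            exact List.mem_append_right _ (List.mem_cons_of_mem _ hcmem)
          have hq₁c : c ∉ q₁.edges := fun hcmem =>
            hPgc (by rw [hdec, Walk.edges_append]; exact List.mem_append_left _ hcmem)
          have hq₂c : c ∉ q₂.edges := by
            intro hcmem
            apply hPgc
            rw [hdec, Walk.edges_append, Walk.edges_cons]
            exact List.mem_append_right _ (List.mem_cons_of_mem _ hcmem)
          have hrx : ((G.deleteEdges {b}).deleteEdges {a}).Reachable α x :=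
            (reachable_delete_two q₁ hq₁b hq₁a).symm
          have hry : ((G.deleteEdges {b}).deleteEdges {a}).Reachable y β :=
            (reachable_delete_two q₂ hq₂b hq₂a).symm
          have hadjxy : ((G.deleteEdges {b}).deleteEdges {a}).Adj x y := by
            rw [deleteEdges_adj, deleteEdges_adj]
            refine ⟨⟨hadj, ?_⟩, ?_⟩
            · simp only [Set.mem_singleton_iff]
              exact fun hcc => hbc hcc.symm
            · simp only [Set.mem_singleton_iff]
              exact fun hcc => hanec hcc.symm
          have hrαβ : ((G.deleteEdges {b}).deleteEdges {a}).Reachable α β :=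
            (hrx.trans hadjxy.reachable).trans hry
          have hadj2 : (G.deleteEdges {b}).Adj α β := by
            rw [deleteEdges_adj]
            refine ⟨hαβG, ?_⟩
            simp only [Set.mem_singleton_iff]
            exact fun hcc => hab (haeq.trans hcc)
          have hcn := connected_deleteEdges hcb2 hadj2 (by rwa [haeq] at hrαβ)
          rw [← haeq, delete_pair, Set.pair_comm] at hcn
          exact hnc2 hcn
        · exact hasep (reachable_delete_two Pg hPgc haP)
  have hinv : ∀ a b, (a = b ∨ G.IsBond {a, b}) →
      (a ∈ insert c (↑(sep H x y) : Set (Sym2 V)) ↔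
        b ∈ insert c (↑(sep H x y) : Set (Sym2 V))) := by
    rintro a b (rfl | hbond2)
    · exact Iff.rfl
    · exact ⟨hstep a b hbond2, hstep b a (by rwa [Set.pair_comm] at hbond2)⟩
  have hclass : {e | G.EdgeEquiv c e} = insert c (↑(sep H x y) : Set (Sym2 V)) := by
    apply Set.Subset.antisymm
    · intro e he
      exact (eqvgen_closure hinv c e he).mp (Set.mem_insert _ _)
    · intro e he
      rw [Set.mem_insert_iff] at he
      rcases he with heq | he
      · rw [Set.mem_setOf_eq, heq]
        exact Relation.EqvGen.refl c
      · exact Relation.EqvGen.rel _ _ (Or.inr (hbond e (Finset.mem_coe.mp he)))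
  have hcnotin : c ∉ sep H x y := by
    intro hcmem
    have := (mem_sep.mp hcmem).1
    rw [hHdef, edgeSet_deleteEdges] at this
    simp at this
  rw [hclass, ← Finset.coe_insert, finsum_mem_coe_finset, Finset.sum_insert hcnotin]
  linarith

lemma class_finsum_zero' (hG : G.Connected)
    (hcyc : ∀ (v : V) (C : G.Walk v v), C.IsCycle → wsum w C = 0)
    {c : Sym2 V} (hc : c ∈ G.edgeSet) (hnb : ¬ G.IsBridge c) :
    ∑ᶠ e ∈ {e | G.EdgeEquiv c e}, w e = 0 := by
  induction c using Sym2.ind with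
  | _ x y => exact class_finsum_zero hG hcyc hc hnb

lemma sum_classes
    (hcond1 : ∀ c ∈ G.edgeSet, ¬ G.IsBridge c →
        (∀ e : Sym2 V, G.EdgeEquiv c e → e = c) → w c = 0)
    (hcond2 : ∀ c ∈ G.edgeSet, 2 ≤ {e | G.EdgeEquiv c e}.ncard →
        ∑ᶠ e ∈ {e | G.EdgeEquiv c e}, w e = 0) :
    ∀ s : Finset (Sym2 V), (∀ c ∈ s, c ∈ G.edgeSet) → (∀ c ∈ s, ¬ G.IsBridge c) →
      (∀ c ∈ s, ∀ e, G.EdgeEquiv c e → e ∈ s) → ∑ e ∈ s, w e = 0 := by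
  intro s
  induction s using Finset.strongInductionOn with
  | _ s ih =>
    intro hedge hbr hcl
    rcases Finset.eq_empty_or_nonempty s with rfl | ⟨c, hc⟩
    · simp
    · have hBfin : ({e | G.EdgeEquiv c e} : Set (Sym2 V)).Finite := Set.toFinite _
      set Bf := hBfin.toFinset with hBfdef
      have hcB : c ∈ Bf := by
        rw [hBfdef, Set.Finite.mem_toFinset]
        exact Relation.EqvGen.refl c
      have hBfs : Bf ⊆ s := by
        intro e he
        rw [hBfdef, Set.Finite.mem_toFinset] at he
        exact hcl c hc e he
      have hsplit := Finset.sum_sdiff (f := w) hBfs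
      have hBsum : ∑ e ∈ Bf, w e = 0 := by
        by_cases hone : ∃ e ∈ Bf, e ≠ c
        · obtain ⟨e, heB, hene⟩ := hone
          rw [hBfdef, Set.Finite.mem_toFinset] at heB
          have h2 : 2 ≤ ({e | G.EdgeEquiv c e} : Set (Sym2 V)).ncard := by
            have := (Set.one_lt_ncard_iff hBfin).mpr
              ⟨e, c, heB, Relation.EqvGen.refl c, hene⟩
            omega
          have h0 := hcond2 c (hedge c hc) h2
          rwa [← Set.Finite.coe_toFinset hBfin, finsum_mem_coe_finset, ← hBfdef] at h0
        · push_neg at hone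
          have hBf1 : Bf = {c} := Finset.eq_singleton_iff_unique_mem.mpr ⟨hcB, hone⟩
          have hsing : ∀ e, G.EdgeEquiv c e → e = c := by
            intro e he
            have hmem : e ∈ Bf := by
              rw [hBfdef, Set.Finite.mem_toFinset]
              exact he
            rw [hBf1] at hmem
            simpa using hmem
          have h0 := hcond1 c (hedge c hc) (hbr c hc) hsing
          rw [hBf1, Finset.sum_singleton, h0]
      have hss : s \ Bf ⊂ s := Finset.sdiff_ssubset hBfs ⟨c, hcB⟩
      have hrec := ih (s \ Bf) hss ?_ ?_ ?_
      · omega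
      · intro c' hc'
        exact hedge c' (Finset.mem_sdiff.mp hc').1
      · intro c' hc'
        exact hbr c' (Finset.mem_sdiff.mp hc').1
      · intro c' hc' e he
        obtain ⟨hc's, hc'nB⟩ := Finset.mem_sdiff.mp hc'
        refine Finset.mem_sdiff.mpr ⟨hcl c' hc's e he, ?_⟩
        intro heB
        rw [hBfdef, Set.Finite.mem_toFinset] at heB
        apply hc'nB
        rw [hBfdef, Set.Finite.mem_toFinset]
        exact Relation.EqvGen.trans _ _ _ heB (Relation.EqvGen.symm _ _ he)

theorem weight_cycles_zero_iff' (hG : G.Connected) :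
    (∀ (v : V) (C : G.Walk v v), C.IsCycle → (C.edges.map w).sum = 0) ↔
      ((∀ c ∈ G.edgeSet, ¬ G.IsBridge c →
          (∀ e : Sym2 V, G.EdgeEquiv c e → e = c) → w c = 0) ∧
       (∀ c ∈ G.edgeSet, 2 ≤ {e | G.EdgeEquiv c e}.ncard →
          ∑ᶠ e ∈ {e | G.EdgeEquiv c e}, w e = 0)) := by
  constructor
  · intro hcyc
    have hcyc' : ∀ (v : V) (C : G.Walk v v), C.IsCycle → wsum w C = 0 := hcyc
    constructor
    · intro c hc hnbr hsing
      have h0 := class_finsum_zero' hG hcyc' hc hnbr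
      have hclass : {e | G.EdgeEquiv c e} = {c} := by
        apply Set.Subset.antisymm
        · intro e he
          exact hsing e he
        · intro e he
          rw [Set.mem_singleton_iff] at he
          rw [Set.mem_setOf_eq, he]
          exact Relation.EqvGen.refl c
      rwa [hclass, finsum_mem_singleton] at h0
    · intro c hc h2
      have hnbr : ¬ G.IsBridge c := by
        intro hbrc
        have hclass : {e | G.EdgeEquiv c e} = {c} := by
          apply Set.Subset.antisymm
          · intro e he
            exact bridge_class hbrc e he
          · intro e he
            rw [Set.mem_singleton_iff] at he
            rw [Set.mem_setOf_eq, he]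
            exact Relation.EqvGen.refl c
        rw [hclass, Set.ncard_singleton] at h2
        omega
      exact class_finsum_zero' hG (fun v C h => hcyc v C h) hc hnbr
  · rintro ⟨hcond1, hcond2⟩ v C hC
    have hnd := hC.isTrail.edges_nodup
    rw [← List.sum_toFinset _ hnd]
    apply sum_classes hcond1 hcond2
    · intro c hcs
      exact C.edges_subset_edgeSet (List.mem_toFinset.mp hcs)
    · intro c hcs hbrc
      exact hbrc.notMem_edges_of_isCycle hC
        (List.mem_toFinset.mp hcs)
    · intro c hcs e he
      have hinv : ∀ a b, (a = b ∨ G.IsBond {a, b}) →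
          (a ∈ {e | e ∈ C.edges} ↔ b ∈ {e | e ∈ C.edges}) := by
        rintro a b (rfl | hbond)
        · exact Iff.rfl
        by_cases hab : a = b
        · rw [hab]
        constructor
        · intro ha
          exact cycle_mem_of_bond hbond hab C hC ha
        · intro hb
          exact cycle_mem_of_bond (Set.pair_comm a b ▸ hbond) (Ne.symm hab) C hC hb
      exact List.mem_toFinset.mpr
        ((eqvgen_closure hinv c e he).mp (List.mem_toFinset.mp hcs))

end CutWeight

/-- Let `w` be an integer weighting of the edges of a finite connected graph
`G`.  Every cycle of `G` has total weight zero if and only if (i) `w c = 0` for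
every edge `c` which is not a cut edge and whose `∼`-equivalence class is the
singleton `{c}`, and (ii) the weights of the edges in each `∼`-equivalence
class of cardinality at least 2 sum to zero. -/
theorem weight_cycles_zero_iff {V : Type*} [Fintype V] [DecidableEq V]
    (G : SimpleGraph V) (hG : G.Connected) (w : Sym2 V → ℤ) :
    (∀ (v : V) (C : G.Walk v v), C.IsCycle → (C.edges.map w).sum = 0) ↔
      ((∀ c ∈ G.edgeSet, ¬ G.IsBridge c →
          (∀ e : Sym2 V, G.EdgeEquiv c e → e = c) → w c = 0) ∧
       (∀ c ∈ G.edgeSet, 2 ≤ {e | G.EdgeEquiv c e}.ncard →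
          ∑ᶠ e ∈ {e | G.EdgeEquiv c e}, w e = 0)) :=
  CutWeight.weight_cycles_zero_iff' hG
end
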